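/- Let K = (k_0, …, k_N) be a switching policy, let J ∈ {0, …, N−1} be an index such that k_J − k_{J−1} ≥ 2 if J ≥ 1 (and k_0 ≥ 1 if J = 0), and let K' = (k'_0, …, k'_N) be the policy with k'_J = k_J − 1 and k'_i = k_i for all i ≠ J. Then W_q(K) ≥ W_q(K'), i.e., decreasing a single switching point by one can only decrease the expected waiting time. -/
import Mathlib


open Finset

/-- A switching policy: `k 0 ≥ 0`, `k i - k (i-1) ≥ 1` for `1 ≤ i ≤ N`, and `k N = S`. -/
def IsPolicy (N : ℕ) (S : ℤ) (k : ℕ → ℤ) : Prop :=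
  0 ≤ k 0 ∧ (∀ i : ℕ, 1 ≤ i → i ≤ N → 1 ≤ k i - k (i - 1)) ∧ k N = S

/-- `X_i = ∏_{g=1}^{i-1} (1/g)^(k_g - k_{g-1})`. -/
noncomputable def Xcoef (k : ℕ → ℤ) (i : ℕ) : ℝ :=
  ∏ g ∈ Finset.Icc 1 (i - 1), ((1 : ℝ) / (g : ℝ)) ^ (k g - k (g - 1))

/-- `β (k 0) = 1` and, for `1 ≤ i ≤ N` and `k (i-1) + 1 ≤ j ≤ k i`,
`β j = (λ/μ)^(j - k 0) * (1/i)^(j - k (i-1)) * X_i`. -/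
def IsBeta (lam mu : ℝ) (N : ℕ) (k : ℕ → ℤ) (β : ℤ → ℝ) : Prop :=
  β (k 0) = 1 ∧
  ∀ i : ℕ, 1 ≤ i → i ≤ N → ∀ j : ℤ, k (i - 1) + 1 ≤ j → j ≤ k i →
    β j = (lam / mu) ^ (j - k 0) * ((1 : ℝ) / (i : ℝ)) ^ (j - k (i - 1)) * Xcoef k i

/-- Steady-state probabilities `P j = β j / Σ_{m=k 0}^{S} β m`. -/
noncomputable def Pfun (S : ℤ) (k : ℕ → ℤ) (β : ℤ → ℝ) (j : ℤ) : ℝ :=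
  β j / ∑ m ∈ Finset.Icc (k 0) S, β m

/-- Expected number of front-room workers. -/
noncomputable def Fval (N : ℕ) (S : ℤ) (k : ℕ → ℤ) (β : ℤ → ℝ) : ℝ :=
  ∑ i ∈ Finset.Icc 1 N, ∑ j ∈ Finset.Icc (k (i - 1) + 1) (k i), (i : ℝ) * Pfun S k β j

/-- Expected number of back-room workers. -/
noncomputable def Bval (N : ℕ) (S : ℤ) (k : ℕ → ℤ) (β : ℤ → ℝ) : ℝ :=
  (N : ℝ) - Fval N S k β

/-- Expected number of customers in the front room. -/
noncomputable def Lval (S : ℤ) (k : ℕ → ℤ) (β : ℤ → ℝ) : ℝ :=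
  ∑ j ∈ Finset.Icc (k 0) S, (j : ℝ) * Pfun S k β j

/-- Expected waiting time `W_q = L / (λ (1 - P S)) - 1/μ`. -/
noncomputable def Wq (lam mu : ℝ) (S : ℤ) (k : ℕ → ℤ) (β : ℤ → ℝ) : ℝ :=
  Lval S k β / (lam * (1 - Pfun S k β S)) - 1 / mu

section Aux

variable {lam mu : ℝ} {N : ℕ} {S : ℤ} {k : ℕ → ℤ} {β : ℤ → ℝ}

lemma policy_mono (hk : IsPolicy N S k) :
    ∀ b, b ≤ N → ∀ a, a ≤ b → k a + ((b : ℤ) - (a : ℤ)) ≤ k b := by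
  intro b
  induction b with
  | zero =>
    intro _ a ha
    have : a = 0 := Nat.le_zero.mp ha
    subst this; simp
  | succ n ih =>
    intro hb a ha
    by_cases ha' : a = n + 1
    · subst ha'; simp
    · have ha2 : a ≤ n := by omega
      have h1 := ih (by omega) a ha2
      have h2 := hk.2.1 (n+1) (by omega) hb
      simp only [Nat.add_sub_cancel] at h2
      push_cast at h1 ⊢
      linarith

lemma policy_le (hk : IsPolicy N S k) {a b : ℕ} (hab : a ≤ b) (hb : b ≤ N) :
    k a ≤ k b := by
  have h := policy_mono hk b hb a hab
  have : (a : ℤ) ≤ (b : ℤ) := by exact_mod_cast hab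
  linarith

lemma policy_lt (hk : IsPolicy N S k) {a b : ℕ} (hab : a < b) (hb : b ≤ N) :
    k a < k b := by
  have h := policy_mono hk b hb a (le_of_lt hab)
  have : (a : ℤ) < (b : ℤ) := by exact_mod_cast hab
  linarith

lemma segment_exists (hk : IsPolicy N S k) {j : ℤ} (h1 : k 0 < j) (h2 : j ≤ S) :
    ∃ i, 1 ≤ i ∧ i ≤ N ∧ k (i - 1) + 1 ≤ j ∧ j ≤ k i := by
  have key : ∀ n, n ≤ N → j ≤ k n → ∃ i, 1 ≤ i ∧ i ≤ n ∧ k (i - 1) + 1 ≤ j ∧ j ≤ k i := by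
    intro n
    induction n with
    | zero => intro _ h; exact absurd h (not_le.mpr h1)
    | succ n ih =>
      intro hn h
      by_cases hj : j ≤ k n
      · obtain ⟨i, hi1, hi2, hi3, hi4⟩ := ih (by omega) hj
        exact ⟨i, hi1, by omega, hi3, hi4⟩
      · refine ⟨n + 1, by omega, le_rfl, ?_, h⟩
        simp only [Nat.add_sub_cancel]
        omega
  obtain ⟨i, hi1, hi2, hi3, hi4⟩ := key N le_rfl (hk.2.2 ▸ h2)
  exact ⟨i, hi1, hi2, hi3, hi4⟩

lemma Xcoef_pos (k : ℕ → ℤ) (i : ℕ) : 0 < Xcoef k i := by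
  unfold Xcoef
  apply Finset.prod_pos
  intro g hg
  simp only [Finset.mem_Icc] at hg
  have hg0 : (0 : ℝ) < (g : ℝ) := by exact_mod_cast hg.1
  exact zpow_pos (by positivity) _

lemma beta_pos (hlam : 0 < lam) (hmu : 0 < mu) (hk : IsPolicy N S k)
    (hβ : IsBeta lam mu N k β) :
    ∀ j : ℤ, k 0 ≤ j → j ≤ S → 0 < β j := by
  intro j hj1 hj2
  rcases eq_or_lt_of_le hj1 with h | h
  · rw [← h, hβ.1]; norm_num
  · obtain ⟨i, hi1, hi2, hji1, hji2⟩ := segment_exists hk h hj2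
    rw [hβ.2 i hi1 hi2 j hji1 hji2]
    have hipos : (0 : ℝ) < (i : ℝ) := by exact_mod_cast hi1
    have hX := Xcoef_pos k i
    have hρ : 0 < lam / mu := div_pos hlam hmu
    exact mul_pos (mul_pos (zpow_pos hρ _) (zpow_pos (by positivity) _)) hX

lemma Icc_split (f : ℤ → ℝ) {a b c : ℤ} (hab : a ≤ b) (hbc : b ≤ c + 1) :
    ∑ j ∈ Finset.Icc a c, f j
      = (∑ j ∈ Finset.Icc a (b - 1), f j) + ∑ j ∈ Finset.Icc b c, f j := by
  have hset : Finset.Icc a c = Finset.Icc a (b - 1) ∪ Finset.Icc b c := by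
    ext x
    simp only [Finset.mem_Icc, Finset.mem_union]
    omega
  rw [hset, Finset.sum_union]
  simp only [Finset.disjoint_left, Finset.mem_Icc]
  intro x hx hx2
  omega

lemma Icc_top (f : ℤ → ℝ) {a c : ℤ} (hac : a ≤ c) :
    ∑ j ∈ Finset.Icc a c, f j = (∑ j ∈ Finset.Icc a (c - 1), f j) + f c := by
  rw [Icc_split f hac (by omega)]
  simp

lemma Icc_bot (f : ℤ → ℝ) {a c : ℤ} (hac : a ≤ c) :
    ∑ j ∈ Finset.Icc a c, f j = f a + ∑ j ∈ Finset.Icc (a + 1) c, f j := by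
  rw [Icc_split f (show a ≤ a + 1 by omega) (by omega)]
  norm_num

lemma Wq_eq (hlam : 0 < lam) (hk0S : k 0 ≤ S - 1)
    (hpos : ∀ j : ℤ, k 0 ≤ j → j ≤ S → 0 < β j) :
    Wq lam mu S k β =
      (∑ j ∈ Finset.Icc (k 0) S, (j : ℝ) * β j)
        / (lam * ∑ j ∈ Finset.Icc (k 0) (S - 1), β j) - 1 / mu := by
  have hU : 0 < ∑ j ∈ Finset.Icc (k 0) (S - 1), β j := by
    apply Finset.sum_pos
    · intro j hj
      simp only [Finset.mem_Icc] at hj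
      exact hpos j hj.1 (by omega)
    · exact ⟨k 0, by simp [Finset.mem_Icc]; omega⟩
  have hsplit : ∑ j ∈ Finset.Icc (k 0) S, β j
      = (∑ j ∈ Finset.Icc (k 0) (S - 1), β j) + β S := Icc_top β (by omega)
  have hβS : 0 < β S := hpos S (by omega) le_rfl
  have hD : 0 < ∑ j ∈ Finset.Icc (k 0) S, β j := by rw [hsplit]; linarith
  unfold Wq Lval Pfun
  set D := ∑ m ∈ Finset.Icc (k 0) S, β m with hDdef
  have h1 : (∑ j ∈ Finset.Icc (k 0) S, (j : ℝ) * (β j / D))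
      = (∑ j ∈ Finset.Icc (k 0) S, (j : ℝ) * β j) / D := by
    rw [Finset.sum_div]
    exact Finset.sum_congr rfl (fun j _ => by ring)
  rw [h1]
  have h2 : 1 - β S / D = (∑ j ∈ Finset.Icc (k 0) (S - 1), β j) / D := by
    rw [eq_div_iff hD.ne', sub_mul, div_mul_cancel₀ _ hD.ne', one_mul]
    have := hsplit
    linarith
  rw [h2]
  have key : ∀ T U D : ℝ, D ≠ 0 → U ≠ 0 → T / D / (lam * (U / D)) = T / (lam * U) := by
    intro T U D hD hU
    field_simp
  rw [key _ _ _ hD.ne' hU.ne']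

end Aux
section Rel

variable {lam mu : ℝ} {N : ℕ} {S : ℤ} {k k' : ℕ → ℤ} {β β' : ℤ → ℝ}

lemma Xcoef_succ (k : ℕ → ℤ) {n : ℕ} (hn : 1 ≤ n) :
    Xcoef k (n + 1) = Xcoef k n * ((1 : ℝ) / (n : ℝ)) ^ (k n - k (n - 1)) := by
  obtain ⟨m, rfl⟩ : ∃ m, n = m + 1 := ⟨n - 1, by omega⟩
  unfold Xcoef
  simp only [Nat.add_sub_cancel]
  rw [Finset.prod_Icc_succ_top (by omega)]
  simp [Nat.add_sub_cancel]

lemma Xcoef_congr {i : ℕ} (h : ∀ g, 1 ≤ g → g ≤ i - 1 → k' g = k g ∧ k' (g - 1) = k (g - 1)) :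
    Xcoef k' i = Xcoef k i := by
  unfold Xcoef
  apply Finset.prod_congr rfl
  intro g hg
  simp only [Finset.mem_Icc] at hg
  rw [(h g hg.1 hg.2).1, (h g hg.1 hg.2).2]

/-- For `i ≤ J`, `Xcoef k' i = Xcoef k i`. -/
lemma Xcoef_le {J : ℕ} (hk'ne : ∀ i : ℕ, i ≠ J → k' i = k i) {i : ℕ} (hi : i ≤ J) :
    Xcoef k' i = Xcoef k i := by
  apply Xcoef_congr
  intro g hg1 hg2
  exact ⟨hk'ne g (by omega), hk'ne (g - 1) (by omega)⟩

lemma Xcoef_J1 {J : ℕ} (hJ1 : 1 ≤ J)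
    (hk'J : k' J = k J - 1) (hk'ne : ∀ i : ℕ, i ≠ J → k' i = k i) :
    Xcoef k' (J + 1) = (J : ℝ) * Xcoef k (J + 1) := by
  have hJne : ((1 : ℝ) / (J : ℝ)) ≠ 0 := by
    have : (0 : ℝ) < (J : ℝ) := by exact_mod_cast hJ1
    positivity
  rw [Xcoef_succ k' hJ1, Xcoef_succ k hJ1, Xcoef_le hk'ne (le_refl J),
      hk'J, hk'ne (J - 1) (by omega)]
  have he : k J - 1 - k (J - 1) = (k J - k (J - 1)) - 1 := by ring
  rw [he, zpow_sub_one₀ hJne]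
  field_simp

end Rel
section Rel2

variable {lam mu : ℝ} {N : ℕ} {S : ℤ} {k k' : ℕ → ℤ} {β β' : ℤ → ℝ}

lemma Xcoef_ge {J : ℕ} (hJ1 : 1 ≤ J) (hk'J : k' J = k J - 1)
    (hk'ne : ∀ i : ℕ, i ≠ J → k' i = k i) :
    ∀ i : ℕ, J + 2 ≤ i → Xcoef k' i = (J : ℝ) / ((J : ℝ) + 1) * Xcoef k i := by
  have hcast : ((J + 1 : ℕ) : ℝ) = (J : ℝ) + 1 := by push_cast; ring
  intro i hi
  induction i, hi using Nat.le_induction with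
  | base =>
    rw [show J + 2 = (J + 1) + 1 from rfl, Xcoef_succ k' (by omega),
        Xcoef_succ k (by omega)]
    simp only [Nat.add_sub_cancel]
    rw [Xcoef_J1 hJ1 hk'J hk'ne, hk'ne (J + 1) (by omega), hk'J]
    have he : k (J + 1) - (k J - 1) = (k (J + 1) - k J) + 1 := by ring
    have hne : ((1 : ℝ) / ((J + 1 : ℕ) : ℝ)) ≠ 0 := by
      rw [hcast]; positivity
    rw [he, zpow_add_one₀ hne, hcast]
    ring
  | succ n hn ih =>
    rw [Xcoef_succ k' (by omega), Xcoef_succ k (by omega), ih,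
        hk'ne n (by omega), hk'ne (n - 1) (by omega)]
    ring

lemma rel_lt (hk : IsPolicy N S k) {J : ℕ} (hJ : J < N) (hJ1 : 1 ≤ J)
    (hk'J : k' J = k J - 1) (hk'ne : ∀ i : ℕ, i ≠ J → k' i = k i)
    (hβ : IsBeta lam mu N k β) (hβ' : IsBeta lam mu N k' β') :
    ∀ j : ℤ, k 0 ≤ j → j ≤ k J - 1 → β' j = β j := by
  intro j hj1 hj2
  have e0 : k' 0 = k 0 := hk'ne 0 (by omega)
  rcases eq_or_lt_of_le hj1 with h | h
  · rw [← h, hβ.1, ← e0]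
    exact hβ'.1
  · have hjS : j ≤ S := by
      have h1 : k J ≤ k N := policy_le hk (le_of_lt hJ) le_rfl
      have h2 := hk.2.2
      linarith
    obtain ⟨i, hi1, hi2, hs1, hs2⟩ := segment_exists hk h hjS
    have hiJ : i ≤ J := by
      by_contra hc
      push_neg at hc
      have : k J ≤ k (i - 1) := policy_le hk (by omega) (by omega)
      linarith
    have e1 : k' (i - 1) = k (i - 1) := hk'ne _ (by omega)
    have hk'i : j ≤ k' i := by
      by_cases hiJ' : i = J
      · rw [hiJ', hk'J]; exact hj2
      · rw [hk'ne i hiJ']; exact hs2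
    rw [hβ'.2 i hi1 hi2 j (by rw [e1]; exact hs1) hk'i,
        hβ.2 i hi1 hi2 j hs1 hs2, e1, e0, Xcoef_le hk'ne hiJ]

lemma rel_ge (hk : IsPolicy N S k) {J : ℕ} (hJ : J < N) (hJ1 : 1 ≤ J)
    (hk'J : k' J = k J - 1) (hk'ne : ∀ i : ℕ, i ≠ J → k' i = k i)
    (hβ : IsBeta lam mu N k β) (hβ' : IsBeta lam mu N k' β') :
    ∀ j : ℤ, k J ≤ j → j ≤ S → β' j = (J : ℝ) / ((J : ℝ) + 1) * β j := by
  intro j hj1 hj2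
  have e0 : k' 0 = k 0 := hk'ne 0 (by omega)
  have hcast : ((J + 1 : ℕ) : ℝ) = (J : ℝ) + 1 := by push_cast; ring
  have hne1 : ((1 : ℝ) / ((J + 1 : ℕ) : ℝ)) ≠ 0 := by rw [hcast]; positivity
  have h0j : k 0 < j := by
    have := policy_lt hk (show 0 < J from hJ1) (by omega)
    linarith
  obtain ⟨i, hi1, hi2, hs1, hs2⟩ := segment_exists hk h0j hj2
  have hJi : J ≤ i := by
    by_contra hc
    push_neg at hc
    have := policy_lt hk hc (by omega)
    linarith
  rcases eq_or_lt_of_le hJi with hiJ | hiJ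
  · -- i = J, so j = k J
    subst hiJ
    have hjt : j = k J := le_antisymm hs2 hj1
    have hkk : k J ≤ k (J + 1) := policy_le hk (by omega) (by omega)
    rw [hβ'.2 (J + 1) (by omega) (by omega) j
          (by simp only [Nat.add_sub_cancel]; rw [hk'J]; linarith)
          (by rw [hk'ne (J + 1) (by omega)]; linarith),
        hβ.2 J hJ1 (by omega) j hs1 hs2]
    simp only [Nat.add_sub_cancel]
    rw [hk'J, e0, Xcoef_J1 hJ1 hk'J hk'ne, Xcoef_succ k hJ1, hjt]
    have he : k J - (k J - 1) = 1 := by ring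
    rw [he, zpow_one, hcast]
    ring
  · have c2 : j ≤ k' i := by rw [hk'ne i (by omega)]; exact hs2
    by_cases hi' : i = J + 1
    · subst hi'
      rw [hβ'.2 (J + 1) (by omega) hi2 j
            (by simp only [Nat.add_sub_cancel]; rw [hk'J]; linarith) c2,
          hβ.2 (J + 1) (by omega) hi2 j hs1 hs2]
      simp only [Nat.add_sub_cancel]
      rw [hk'J, e0, Xcoef_J1 hJ1 hk'J hk'ne]
      have he : j - (k J - 1) = (j - k J) + 1 := by ring
      rw [he, zpow_add_one₀ hne1, hcast]
      ring
    · have hle : J + 2 ≤ i := by omega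
      rw [hβ'.2 i hi1 hi2 j (by rw [hk'ne (i - 1) (by omega)]; exact hs1) c2,
          hβ.2 i hi1 hi2 j hs1 hs2,
          hk'ne (i - 1) (by omega), e0, Xcoef_ge hJ1 hk'J hk'ne i hle]
      ring

end Rel2
section Rel0

variable {lam mu : ℝ} {N : ℕ} {S : ℤ} {k k' : ℕ → ℤ} {β β' : ℤ → ℝ}

lemma rel0 (hlam : 0 < lam) (hmu : 0 < mu) (hk : IsPolicy N S k) (hN : 1 ≤ N)
    (hk'0 : k' 0 = k 0 - 1) (hk'ne : ∀ i : ℕ, i ≠ 0 → k' i = k i)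
    (hβ : IsBeta lam mu N k β) (hβ' : IsBeta lam mu N k' β') :
    ∀ j : ℤ, k 0 ≤ j → j ≤ S → β' j = (lam / mu) * β j := by
  have hρne : (lam / mu) ≠ 0 := (div_pos hlam hmu).ne'
  have hX1 : Xcoef k' 1 = 1 := by
    unfold Xcoef
    rw [show (1 : ℕ) - 1 = 0 from rfl, Finset.Icc_eq_empty (by omega)]
    exact Finset.prod_empty
  have hX1k : Xcoef k 1 = 1 := by
    unfold Xcoef
    rw [show (1 : ℕ) - 1 = 0 from rfl, Finset.Icc_eq_empty (by omega)]
    exact Finset.prod_empty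
  intro j hj1 hj2
  rcases eq_or_lt_of_le hj1 with h | h
  · rw [← h, hβ.1]
    have hk01 : k 0 ≤ k 1 := policy_le hk (by omega) hN
    rw [hβ'.2 1 le_rfl hN (k 0)
          (by rw [show (1 : ℕ) - 1 = 0 from rfl, hk'0]; linarith)
          (by rw [hk'ne 1 one_ne_zero]; exact hk01)]
    rw [show (1 : ℕ) - 1 = 0 from rfl, hk'0, hX1]
    have he : k 0 - (k 0 - 1) = 1 := by ring
    rw [he, zpow_one]
    norm_num
  · obtain ⟨i, hi1, hi2, hs1, hs2⟩ := segment_exists hk h hj2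
    have c2 : j ≤ k' i := by rw [hk'ne i (by omega)]; exact hs2
    by_cases hi' : i = 1
    · subst hi'
      rw [hβ'.2 1 le_rfl hN j
            (by rw [show (1 : ℕ) - 1 = 0 from rfl, hk'0]; linarith) c2,
          hβ.2 1 le_rfl hN j hs1 hs2]
      rw [show (1 : ℕ) - 1 = 0 from rfl, hk'0, hX1, hX1k]
      have he : j - (k 0 - 1) = (j - k 0) + 1 := by ring
      rw [he, zpow_add_one₀ hρne]
      norm_num
      ring
    · have hX : Xcoef k' i = Xcoef k i := by
        unfold Xcoef
        apply Finset.prod_congr rfl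
        intro g hg
        simp only [Finset.mem_Icc] at hg
        by_cases hg1 : g = 1
        · subst hg1; norm_num
        · rw [hk'ne g (by omega), hk'ne (g - 1) (by omega)]
      rw [hβ'.2 i hi1 hi2 j
            (by rw [hk'ne (i - 1) (by omega)]; exact hs1) c2,
          hβ.2 i hi1 hi2 j hs1 hs2, hk'ne (i - 1) (by omega), hk'0, hX]
      have he : j - (k 0 - 1) = (j - k 0) + 1 := by ring
      rw [he, zpow_add_one₀ hρne]
      ring

end Rel0
/-- Decreasing a single switching point by one can only decrease the
expected waiting time. -/
theorem wq_single_decrease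
    (lam mu : ℝ) (hlam : 0 < lam) (hmu : 0 < mu)
    (N : ℕ) (hN : 1 ≤ N) (S : ℤ) (hS : (N : ℤ) ≤ S)
    (k k' : ℕ → ℤ) (hk : IsPolicy N S k)
    (J : ℕ) (hJ : J < N)
    (hgap1 : 1 ≤ J → 2 ≤ k J - k (J - 1))
    (hgap0 : J = 0 → 1 ≤ k 0)
    (hk'J : k' J = k J - 1)
    (hk'ne : ∀ i : ℕ, i ≠ J → k' i = k i)
    (β β' : ℤ → ℝ)
    (hβ : IsBeta lam mu N k β) (hβ' : IsBeta lam mu N k' β') :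
    Wq lam mu S k' β' ≤ Wq lam mu S k β := by
  -- k' is a policy
  have hk'pol : IsPolicy N S k' := by
    refine ⟨?_, ?_, ?_⟩
    · by_cases h0 : J = 0
      · have h1 := hgap0 h0
        have h2 : k' 0 = k 0 - 1 := by rw [← h0]; exact hk'J
        linarith
      · rw [hk'ne 0 (by omega)]; exact hk.1
    · intro i hi1 hi2
      by_cases hiJ : i = J
      · subst hiJ
        rw [hk'J, hk'ne (i - 1) (by omega)]
        have := hgap1 hi1
        linarith
      · by_cases hiJ1 : i = J + 1
        · subst hiJ1
          have h2 := hk.2.1 (J + 1) (by omega) hi2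
          simp only [Nat.add_sub_cancel] at h2 ⊢
          rw [hk'ne (J + 1) (by omega), hk'J]
          linarith
        · rw [hk'ne i hiJ, hk'ne (i - 1) (by omega)]
          exact hk.2.1 i hi1 hi2
    · rw [hk'ne N (by omega)]; exact hk.2.2
  have hbpos := beta_pos hlam hmu hk hβ
  have hb'pos := beta_pos hlam hmu hk'pol hβ'
  have hk0 : 0 ≤ k 0 := hk.1
  have hNS : k 0 + (N : ℤ) ≤ S := by
    have h1 := policy_mono hk N le_rfl 0 (Nat.zero_le N)
    rw [hk.2.2] at h1
    push_cast at h1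
    linarith
  have hN1 : (1 : ℤ) ≤ (N : ℤ) := by exact_mod_cast hN
  have hk0S1 : k 0 ≤ S - 1 := by linarith
  have hk'0le : k' 0 ≤ k 0 := by
    by_cases h0 : J = 0
    · have h2 : k' 0 = k 0 - 1 := by rw [← h0]; exact hk'J
      linarith
    · rw [hk'ne 0 (by omega)]
  have hk'0S1 : k' 0 ≤ S - 1 := by linarith
  -- the key cross-multiplied inequality
  have key : (∑ j ∈ Finset.Icc (k' 0) S, (j : ℝ) * β' j)
        * (∑ j ∈ Finset.Icc (k 0) (S - 1), β j)
      ≤ (∑ j ∈ Finset.Icc (k 0) S, (j : ℝ) * β j)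
        * (∑ j ∈ Finset.Icc (k' 0) (S - 1), β' j) := by
    by_cases h0 : J = 0
    · -- J = 0 : k' 0 = k 0 - 1 and β' = ρ β above k 0
      subst h0
      have hk'0 : k' 0 = k 0 - 1 := hk'J
      have h1k0 : (1 : ℤ) ≤ k 0 := hgap0 rfl
      have hrel := rel0 hlam hmu hk hN hk'0 (fun i hi => hk'ne i hi) hβ hβ'
      have hb0 : β' (k 0 - 1) = 1 := by rw [← hk'0]; exact hβ'.1
      set T := ∑ j ∈ Finset.Icc (k 0) S, (j : ℝ) * β j with hTdef
      set U := ∑ j ∈ Finset.Icc (k 0) (S - 1), β j with hUdef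
      have hT' : (∑ j ∈ Finset.Icc (k' 0) S, (j : ℝ) * β' j)
          = ((k 0 : ℝ) - 1) + (lam / mu) * T := by
        rw [hk'0, Icc_bot _ (by linarith), show k 0 - 1 + 1 = k 0 from by ring, hb0]
        have h2 : (∑ j ∈ Finset.Icc (k 0) S, (j : ℝ) * β' j)
            = (lam / mu) * T := by
          rw [hTdef, Finset.mul_sum]
          apply Finset.sum_congr rfl
          intro j hj
          simp only [Finset.mem_Icc] at hj
          rw [hrel j hj.1 hj.2]
          ring
        rw [h2]
        push_cast
        ring
      have hU' : (∑ j ∈ Finset.Icc (k' 0) (S - 1), β' j) = 1 + (lam / mu) * U := by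
        rw [hk'0, Icc_bot _ (by linarith), show k 0 - 1 + 1 = k 0 from by ring, hb0]
        have h2 : (∑ j ∈ Finset.Icc (k 0) (S - 1), β' j) = (lam / mu) * U := by
          rw [hUdef, Finset.mul_sum]
          apply Finset.sum_congr rfl
          intro j hj
          simp only [Finset.mem_Icc] at hj
          rw [hrel j hj.1 (by linarith [hj.2])]
        rw [h2]
      rw [hT', hU']
      -- reduces to (k 0 - 1) * U ≤ T
      have hUnn : (0 : ℝ) ≤ U := by
        apply Finset.sum_nonneg
        intro j hj
        simp only [Finset.mem_Icc] at hj
        exact (hbpos j hj.1 (by linarith [hj.2])).le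
      have hTl : (k 0 : ℝ) * U ≤ T := by
        have s1 : U ≤ ∑ j ∈ Finset.Icc (k 0) S, β j := by
          apply Finset.sum_le_sum_of_subset_of_nonneg
          · exact Finset.Icc_subset_Icc_right (by linarith)
          · intro j hj _
            simp only [Finset.mem_Icc] at hj
            exact (hbpos j hj.1 hj.2).le
        have s2 : (k 0 : ℝ) * ∑ j ∈ Finset.Icc (k 0) S, β j ≤ T := by
          rw [hTdef, Finset.mul_sum]
          apply Finset.sum_le_sum
          intro j hj
          simp only [Finset.mem_Icc] at hj
          have hcj : ((k 0 : ℤ) : ℝ) ≤ (j : ℝ) := by exact_mod_cast hj.1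
          exact mul_le_mul_of_nonneg_right hcj (hbpos j hj.1 hj.2).le
        have hk0r : (0 : ℝ) ≤ (k 0 : ℝ) := by exact_mod_cast hk0
        nlinarith [mul_le_mul_of_nonneg_left s1 hk0r]
      nlinarith [hTl, hUnn]
    · -- J ≥ 1
      have hJ1 : 1 ≤ J := by omega
      have e0 : k' 0 = k 0 := hk'ne 0 (by omega)
      have hrlt := rel_lt hk hJ hJ1 hk'J hk'ne hβ hβ'
      have hrge := rel_ge hk hJ hJ1 hk'J hk'ne hβ hβ'
      have hkt : k 0 + (J : ℤ) ≤ k J := by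
        have h1 := policy_mono hk J (by omega) 0 (Nat.zero_le J)
        push_cast at h1
        linarith
      have hJ1Z : (1 : ℤ) ≤ (J : ℤ) := by exact_mod_cast hJ1
      have hk0t : k 0 ≤ k J - 1 := by linarith
      have htS : k J ≤ S := by
        have h1 := policy_le hk (le_of_lt hJ) le_rfl
        rw [hk.2.2] at h1
        exact h1
      set c : ℝ := (J : ℝ) / ((J : ℝ) + 1) with hcdef
      have hJr : (0 : ℝ) < (J : ℝ) := by exact_mod_cast hJ1
      have hc0 : 0 ≤ c := by positivity
      have hc1 : c ≤ 1 := by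
        rw [hcdef, div_le_one (by positivity)]
        linarith
      set T1 := ∑ j ∈ Finset.Icc (k 0) (k J - 1), (j : ℝ) * β j with hT1def
      set T2 := ∑ j ∈ Finset.Icc (k J) S, (j : ℝ) * β j with hT2def
      set U1 := ∑ j ∈ Finset.Icc (k 0) (k J - 1), β j with hU1def
      set U2 := ∑ j ∈ Finset.Icc (k J) (S - 1), β j with hU2def
      have hT : (∑ j ∈ Finset.Icc (k 0) S, (j : ℝ) * β j) = T1 + T2 :=
        Icc_split _ (by linarith) (by linarith)
      have hU : (∑ j ∈ Finset.Icc (k 0) (S - 1), β j) = U1 + U2 :=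
        Icc_split _ (by linarith) (by linarith)
      have hT' : (∑ j ∈ Finset.Icc (k' 0) S, (j : ℝ) * β' j) = T1 + c * T2 := by
        rw [e0, Icc_split _ (show k 0 ≤ k J by linarith) (by linarith)]
        congr 1
        · apply Finset.sum_congr rfl
          intro j hj
          simp only [Finset.mem_Icc] at hj
          rw [hrlt j hj.1 hj.2]
        · rw [hT2def, Finset.mul_sum]
          apply Finset.sum_congr rfl
          intro j hj
          simp only [Finset.mem_Icc] at hj
          rw [hrge j hj.1 hj.2]
          ring
      have hU' : (∑ j ∈ Finset.Icc (k' 0) (S - 1), β' j) = U1 + c * U2 := by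
        rw [e0, Icc_split _ (show k 0 ≤ k J by linarith) (by linarith)]
        congr 1
        · apply Finset.sum_congr rfl
          intro j hj
          simp only [Finset.mem_Icc] at hj
          rw [hrlt j hj.1 hj.2]
        · rw [hU2def, Finset.mul_sum]
          apply Finset.sum_congr rfl
          intro j hj
          simp only [Finset.mem_Icc] at hj
          rw [hrge j hj.1 (by linarith [hj.2])]
      rw [hT, hU, hT', hU']
      -- cross inequality T1 * U2 ≤ T2 * U1
      have hcross : T1 * U2 ≤ T2 * U1 := by
        have hT1nn : 0 ≤ T1 := by
          apply Finset.sum_nonneg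
          intro j hj
          simp only [Finset.mem_Icc] at hj
          have h1 : (0 : ℝ) ≤ (j : ℝ) := by exact_mod_cast le_trans hk0 hj.1
          exact mul_nonneg h1 (hbpos j hj.1 (by linarith [hj.2])).le
        have hU2b : U2 ≤ ∑ m ∈ Finset.Icc (k J) S, β m := by
          apply Finset.sum_le_sum_of_subset_of_nonneg
          · exact Finset.Icc_subset_Icc_right (by linarith)
          · intro m hm _
            simp only [Finset.mem_Icc] at hm
            exact (hbpos m (by linarith [hm.1]) hm.2).le
        calc T1 * U2 ≤ T1 * ∑ m ∈ Finset.Icc (k J) S, β m :=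
              mul_le_mul_of_nonneg_left hU2b hT1nn
        _ ≤ U1 * T2 := by
            rw [hT1def, hU1def, hT2def, Finset.sum_mul_sum, Finset.sum_mul_sum]
            apply Finset.sum_le_sum
            intro j hj
            apply Finset.sum_le_sum
            intro m hm
            simp only [Finset.mem_Icc] at hj hm
            have hbj := hbpos j hj.1 (by linarith [hj.2])
            have hbm := hbpos m (by linarith [hm.1]) hm.2
            have hjm : (j : ℝ) ≤ (m : ℝ) := by
              have : j ≤ m := by linarith [hj.2, hm.1]
              exact_mod_cast this
            nlinarith [mul_le_mul_of_nonneg_left hjm (mul_nonneg hbj.le hbm.le)]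
        _ = T2 * U1 := mul_comm _ _
      nlinarith [mul_nonneg (sub_nonneg.mpr hc1) (sub_nonneg.mpr hcross)]
  -- conclude
  have hU : 0 < ∑ j ∈ Finset.Icc (k 0) (S - 1), β j := by
    apply Finset.sum_pos
    · intro j hj
      simp only [Finset.mem_Icc] at hj
      exact hbpos j hj.1 (by linarith [hj.2])
    · exact ⟨k 0, by simp only [Finset.mem_Icc]; omega⟩
  have hU' : 0 < ∑ j ∈ Finset.Icc (k' 0) (S - 1), β' j := by
    apply Finset.sum_pos
    · intro j hj
      simp only [Finset.mem_Icc] at hj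
      exact hb'pos j hj.1 (by linarith [hj.2])
    · exact ⟨k' 0, by simp only [Finset.mem_Icc]; omega⟩
  rw [Wq_eq hlam hk0S1 hbpos, Wq_eq hlam hk'0S1 hb'pos]
  apply sub_le_sub_right
  rw [div_le_div_iff₀ (by positivity) (by positivity)]
  nlinarith [mul_le_mul_of_nonneg_left key hlam.le]
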